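/- Let P, P̄ ∈ ℝ^{S×S} be row-stochastic matrices, γ ∈ [0,1), φ₁,…,φ_d : S → ℝ, εM, εQ ≥ 0, and β > 0. Assume for every x ∈ S: (i) ∑_y |P(x,y) − P̄(x,y)| ≤ √2·εM + (2/β)·εQ; (ii) ∑_{i=1}^d |(Pφᵢ)(x) − (P̄φᵢ)(x)| ≤ √d·(β·εM + 2·εQ), where (Pφ)(x) := ∑_y P(x,y)·φ(y). Then for every v ∈ ℝ^S and every w ∈ ℝ^d: ‖(I − γP̄)⁻¹(γP − γP̄)v‖∞ ≤ (γ/(1−γ))·(√2·εM + (2/β)·εQ)·‖v − ∑_{i=1}^d wᵢφᵢ‖∞ + (γ√d/(1−γ))·(β·εM + 2·εQ)·‖w‖∞. -/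

import Mathlib

/-!
Write `D = P - P̄` and `r = v - ∑ wᵢ φᵢ`. Row by row, `(D v)(x) = D(x,·) ⬝ r + ∑ wᵢ (D φᵢ)(x)`, so
hypotheses (i) and (ii) bound `‖D v‖∞` by the two constants times `‖r‖∞` and `‖w‖∞`. Since `P̄` is
row-stochastic, `‖P̄ z‖∞ ≤ ‖z‖∞`, hence `(1 - γ) ‖z‖∞ ≤ ‖(I - γ P̄) z‖∞`; this makes `I - γ P̄`
invertible with `‖(I - γ P̄)⁻¹ b‖∞ ≤ ‖b‖∞ / (1 - γ)`.
-/

open Finset Matrix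

/-- Supremum norm of a vector indexed by a finite type. -/
noncomputable def supNorm {S : Type*} [Fintype S] (v : S → ℝ) : ℝ := ⨆ x, |v x|

theorem supNorm_eq_norm {S : Type*} [Fintype S] (v : S → ℝ) : supNorm v = ‖v‖ := by
  have hbdd : BddAbove (Set.range fun x => |v x|) := (Set.finite_range _).bddAbove
  apply le_antisymm
  · exact Real.iSup_le (fun x => norm_le_pi_norm v x) (norm_nonneg v)
  · refine (pi_norm_le_iff_of_nonneg (Real.iSup_nonneg fun x => abs_nonneg (v x))).2 fun x => ?_
    exact le_ciSup hbdd x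

section

variable {S : Type*} [Fintype S]

theorem abs_dotProduct_le (a z : S → ℝ) : |a ⬝ᵥ z| ≤ (∑ y, |a y|) * ‖z‖ :=
  calc |a ⬝ᵥ z| ≤ ∑ y, |a y * z y| := abs_sum_le_sum_abs _ _
    _ ≤ ∑ y, |a y| * ‖z‖ := by
      gcongr with y
      rw [abs_mul]
      exact mul_le_mul_of_nonneg_left (norm_le_pi_norm z y) (abs_nonneg _)
    _ = (∑ y, |a y|) * ‖z‖ := (sum_mul ..).symm

theorem norm_mulVec_le_of_sum_abs_le [Nonempty S] {M : Matrix S S ℝ} {C : ℝ}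
    (hM : ∀ x, ∑ y, |M x y| ≤ C) (z : S → ℝ) : ‖M *ᵥ z‖ ≤ C * ‖z‖ :=
  (pi_norm_le_iff_of_nonempty _).2 fun x =>
    (abs_dotProduct_le (M x) z).trans (mul_le_mul_of_nonneg_right (hM x) (norm_nonneg z))

variable [DecidableEq S] [Nonempty S] {Pbar : Matrix S S ℝ} {γ : ℝ}

theorem norm_le_norm_one_sub_smul_mulVec (hPbar0 : ∀ x y, 0 ≤ Pbar x y)
    (hPbar1 : ∀ x, ∑ y, Pbar x y = 1) (hγ0 : 0 ≤ γ) (z : S → ℝ) :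
    (1 - γ) * ‖z‖ ≤ ‖(1 - γ • Pbar) *ᵥ z‖ := by
  have hPz : ‖Pbar *ᵥ z‖ ≤ ‖z‖ := by
    simpa using norm_mulVec_le_of_sum_abs_le (C := 1)
      (fun x => by simp only [abs_of_nonneg (hPbar0 x _), hPbar1 x, le_refl]) z
  have hz : z = (1 - γ • Pbar) *ᵥ z + γ • Pbar *ᵥ z := by
    rw [sub_mulVec, one_mulVec, smul_mulVec, sub_add_cancel]
  have := norm_add_le ((1 - γ • Pbar) *ᵥ z) (γ • Pbar *ᵥ z)
  rw [← hz, norm_smul, Real.norm_of_nonneg hγ0] at this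
  linarith [mul_le_mul_of_nonneg_left hPz hγ0]

theorem isUnit_one_sub_smul (hPbar0 : ∀ x y, 0 ≤ Pbar x y)
    (hPbar1 : ∀ x, ∑ y, Pbar x y = 1) (hγ0 : 0 ≤ γ) (hγ1 : γ < 1) :
    IsUnit (1 - γ • Pbar) := by
  refine mulVec_injective_iff_isUnit.1 fun z₁ z₂ h => ?_
  have hker := norm_le_norm_one_sub_smul_mulVec hPbar0 hPbar1 hγ0 (z₁ - z₂)
  rw [mulVec_sub, h, sub_self, norm_zero] at hker
  have : ‖z₁ - z₂‖ = 0 := le_antisymm (nonpos_of_mul_nonpos_right hker (by linarith)) (norm_nonneg _)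
  exact sub_eq_zero.1 (norm_eq_zero.1 this)

theorem norm_inv_one_sub_smul_mulVec_le (hPbar0 : ∀ x y, 0 ≤ Pbar x y)
    (hPbar1 : ∀ x, ∑ y, Pbar x y = 1) (hγ0 : 0 ≤ γ) (hγ1 : γ < 1) (b : S → ℝ) :
    ‖(1 - γ • Pbar)⁻¹ *ᵥ b‖ ≤ ‖b‖ / (1 - γ) := by
  have hdet := (isUnit_iff_isUnit_det _).1 (isUnit_one_sub_smul hPbar0 hPbar1 hγ0 hγ1)
  have h := norm_le_norm_one_sub_smul_mulVec hPbar0 hPbar1 hγ0 ((1 - γ • Pbar)⁻¹ *ᵥ b)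
  rw [mulVec_mulVec, mul_nonsing_inv _ hdet, one_mulVec] at h
  rw [le_div_iff₀ (by linarith)]
  linarith

end

theorem norm_mulVec_le_of_approx {S ι : Type*} [Fintype S] [Nonempty S] [Fintype ι]
    {D : Matrix S S ℝ} {φ : ι → S → ℝ} {C₁ C₂ : ℝ}
    (hD : ∀ x, ∑ y, |D x y| ≤ C₁) (hDφ : ∀ x, ∑ i, |(D *ᵥ φ i) x| ≤ C₂)
    (v : S → ℝ) (w : ι → ℝ) :
    ‖D *ᵥ v‖ ≤ C₁ * ‖fun x => v x - ∑ i, w i * φ i x‖ + C₂ * ‖w‖ := by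
  refine (pi_norm_le_iff_of_nonempty _).2 fun x => ?_
  set r : S → ℝ := fun x => v x - ∑ i, w i * φ i x
  have hsplit : (D *ᵥ v) x = D x ⬝ᵥ r + w ⬝ᵥ fun i => (D *ᵥ φ i) x := by
    have hv : v = r + ∑ i, w i • φ i := by ext y; simp [r]
    rw [hv, mulVec_add, mulVec_sum, Pi.add_apply, Finset.sum_apply]
    simp only [mulVec_smul, Pi.smul_apply, smul_eq_mul]
    rfl
  calc |(D *ᵥ v) x| ≤ |D x ⬝ᵥ r| + |w ⬝ᵥ fun i => (D *ᵥ φ i) x| := by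
        rw [hsplit]; exact abs_add_le _ _
    _ ≤ (∑ y, |D x y|) * ‖r‖ + (∑ i, |(D *ᵥ φ i) x|) * ‖w‖ := by
        rw [dotProduct_comm w]
        exact add_le_add (abs_dotProduct_le _ _) (abs_dotProduct_le _ _)
    _ ≤ C₁ * ‖r‖ + C₂ * ‖w‖ := by gcongr; exacts [hD x, hDφ x]

theorem stmt12_general {S : Type*} [Fintype S] [Nonempty S] [DecidableEq S]
    (P Pbar : Matrix S S ℝ) (γ : ℝ)
    (hPbar0 : ∀ x y, 0 ≤ Pbar x y) (hPbar1 : ∀ x, ∑ y, Pbar x y = 1)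
    (hγ0 : 0 ≤ γ) (hγ1 : γ < 1)
    (d : ℕ) (φ : Fin d → S → ℝ) (εM εQ β : ℝ)
    (hTV : ∀ x, ∑ y, |P x y - Pbar x y| ≤ Real.sqrt 2 * εM + (2 / β) * εQ)
    (hQ : ∀ x, ∑ i : Fin d, |(∑ y, P x y * φ i y) - ∑ y, Pbar x y * φ i y| ≤
      Real.sqrt d * (β * εM + 2 * εQ)) :
    ∀ v : S → ℝ, ∀ w : Fin d → ℝ,
      supNorm (((1 : Matrix S S ℝ) - γ • Pbar)⁻¹.mulVec ((γ • P - γ • Pbar).mulVec v)) ≤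
        (γ / (1 - γ)) * (Real.sqrt 2 * εM + (2 / β) * εQ) *
            supNorm (fun x => v x - ∑ i, w i * φ i x) +
          (γ * Real.sqrt d / (1 - γ)) * (β * εM + 2 * εQ) * supNorm w := by
  intro v w
  simp only [supNorm_eq_norm, ← smul_sub, smul_mulVec]
  have hDv := norm_mulVec_le_of_approx (D := P - Pbar) hTV
    (fun x => by simp only [sub_mulVec]; exact hQ x) v w
  calc _ ≤ ‖γ • (P - Pbar) *ᵥ v‖ / (1 - γ) :=
        norm_inv_one_sub_smul_mulVec_le hPbar0 hPbar1 hγ0 hγ1 _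
    _ = γ * ‖(P - Pbar) *ᵥ v‖ / (1 - γ) := by rw [norm_smul, Real.norm_of_nonneg hγ0]
    _ ≤ γ * ((Real.sqrt 2 * εM + (2 / β) * εQ) * ‖fun x => v x - ∑ i, w i * φ i x‖ +
          Real.sqrt d * (β * εM + 2 * εQ) * ‖w‖) / (1 - γ) := by gcongr
    _ = _ := by ring

theorem stmt12 {S : Type*} [Fintype S] [Nonempty S] [DecidableEq S]
    (P Pbar : Matrix S S ℝ) (γ : ℝ)
    (hP0 : ∀ x y, 0 ≤ P x y) (hP1 : ∀ x, ∑ y, P x y = 1)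
    (hPbar0 : ∀ x y, 0 ≤ Pbar x y) (hPbar1 : ∀ x, ∑ y, Pbar x y = 1)
    (hγ0 : 0 ≤ γ) (hγ1 : γ < 1)
    (d : ℕ) (φ : Fin d → S → ℝ) (εM εQ β : ℝ)
    (hεM : 0 ≤ εM) (hεQ : 0 ≤ εQ) (hβ : 0 < β)
    (hTV : ∀ x, ∑ y, |P x y - Pbar x y| ≤ Real.sqrt 2 * εM + (2 / β) * εQ)
    (hQ : ∀ x, ∑ i : Fin d, |(∑ y, P x y * φ i y) - ∑ y, Pbar x y * φ i y| ≤
      Real.sqrt d * (β * εM + 2 * εQ)) :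
    ∀ v : S → ℝ, ∀ w : Fin d → ℝ,
      supNorm (((1 : Matrix S S ℝ) - γ • Pbar)⁻¹.mulVec ((γ • P - γ • Pbar).mulVec v)) ≤
        (γ / (1 - γ)) * (Real.sqrt 2 * εM + (2 / β) * εQ) *
            supNorm (fun x => v x - ∑ i, w i * φ i x) +
          (γ * Real.sqrt d / (1 - γ)) * (β * εM + 2 * εQ) * supNorm w :=
  stmt12_general P Pbar γ hPbar0 hPbar1 hγ0 hγ1 d φ εM εQ β hTV hQ
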